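/- arXiv:0902.1870 — 2 statements merged into one kernel-verified Lean document; each statement's English description precedes it below -/
import Mathlib

section
/- Let 1/2 < δ < 1 and let f : (0,1] → R be given by f(x) = x^{-δ}, extended to T = R/Z. Then f ∈ L¹(T), but the sequence of Riemann sums R_n f(x) = (1/n) Σ_{j=0}^{n-1} f(x + j/n) fails to converge to ∫ f for almost every x; in fact limsup_n R_n f(x) = +∞ for almost every x ∈ T. -/
/-!
For irrational `x` there are infinitely many `n` with `0 < {n x} < 1 / n`. They come from the
Stern–Brocot descent: Farey neighbours `r / p < x < s / q` with `p s - q r = 1` have gaps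
`a = p x - r` and `b = s - q x` with `p b + q a = 1`, so `a < b` forces `p a < 1`, and subtracting
from the larger gap as many multiples of the smaller one as possible (the continued fraction
algorithm) produces such brackets with `p` arbitrarily large. For such an `n`, one of the points
`x + j / n` has fractional part `{n x} / n < 1 / n²`, so `R_n f(x) ≥ n⁻¹ (n²)^δ = n^(2δ - 1) → ∞`;
and almost every `x` is irrational.
-/

open MeasureTheory Filter Topology

lemma exists_nat_sub_mul_mem_Ioo {a b : ℝ} (ha : 0 ≤ a) (hb : 0 < b)
    (h : ∀ m : ℕ, a - m * b ≠ 0) : ∃ m : ℕ, 0 < a - m * b ∧ a - m * b < b := by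
  refine ⟨⌊a / b⌋₊, (h _).symm.lt_of_le ?_, ?_⟩
  · have := Nat.floor_le (div_nonneg ha hb.le)
    rw [le_div_iff₀ hb] at this
    linarith
  · have := Nat.lt_floor_add_one (a / b)
    rw [div_lt_iff₀ hb] at this
    linarith

lemma Irrational.natCast_mul_sub_intCast_ne_zero {x : ℝ} (hx : Irrational x) {n : ℕ} (hn : n ≠ 0)
    (z : ℤ) : (n : ℝ) * x - z ≠ 0 :=
  sub_ne_zero.2 ((hx.natCast_mul hn).ne_int z)

structure FareyBracket (x : ℝ) where
  p : ℕ
  q : ℕ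
  r : ℤ
  s : ℤ
  one_le_p : 1 ≤ p
  one_le_q : 1 ≤ q
  det : (p : ℤ) * s - q * r = 1
  lower : (r : ℝ) < p * x
  upper : (q : ℝ) * x < s

namespace FareyBracket

variable {x : ℝ} (B : FareyBracket x)

def lowerGap : ℝ := B.p * x - B.r

def upperGap : ℝ := B.s - B.q * x

lemma lowerGap_pos : 0 < B.lowerGap := sub_pos.2 B.lower

lemma upperGap_pos : 0 < B.upperGap := sub_pos.2 B.upper

lemma p_mul_upperGap_add_q_mul_lowerGap : B.p * B.upperGap + B.q * B.lowerGap = 1 := by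
  have := congrArg (Int.cast : ℤ → ℝ) B.det
  push_cast at this
  simp only [lowerGap, upperGap]
  linear_combination this

lemma p_mul_lowerGap_lt_one (h : B.lowerGap < B.upperGap) : B.p * B.lowerGap < 1 := by
  have hp : (0 : ℝ) < B.p := by exact_mod_cast B.one_le_p
  have hq : (0 : ℝ) < B.q := by exact_mod_cast B.one_le_q
  calc B.p * B.lowerGap < B.p * B.upperGap := mul_lt_mul_of_pos_left h hp
    _ < B.p * B.upperGap + B.q * B.lowerGap := lt_add_of_pos_right _ (mul_pos hq B.lowerGap_pos)
    _ = 1 := B.p_mul_upperGap_add_q_mul_lowerGap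

lemma fract_p_mul (h : B.lowerGap < B.upperGap) : Int.fract (B.p * x) = B.lowerGap := by
  have hp : (1 : ℝ) ≤ B.p := by exact_mod_cast B.one_le_p
  have := B.p_mul_lowerGap_lt_one h
  refine Int.fract_eq_iff.2 ⟨B.lowerGap_pos.le, ?_, B.r, by simp [lowerGap]⟩
  nlinarith [B.lowerGap_pos]

noncomputable def floor (hx : Irrational x) : FareyBracket x where
  p := 1
  q := 1
  r := ⌊x⌋
  s := ⌊x⌋ + 1
  one_le_p := le_rfl
  one_le_q := le_rfl
  det := by ring
  lower := by rw [Nat.cast_one, one_mul]; exact (Int.floor_le x).lt_of_ne (hx.ne_int _).symm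
  upper := by rw [Nat.cast_one, one_mul]; exact_mod_cast Int.lt_floor_add_one x

def shiftLower (m : ℕ) (h : 0 < B.lowerGap - m * B.upperGap) : FareyBracket x where
  p := B.p + m * B.q
  q := B.q
  r := B.r + m * B.s
  s := B.s
  one_le_p := le_add_right B.one_le_p
  one_le_q := B.one_le_q
  det := by push_cast; linear_combination B.det
  lower := by simp only [lowerGap, upperGap] at h; push_cast; linarith
  upper := B.upper

def shiftUpper (m : ℕ) (h : 0 < B.upperGap - m * B.lowerGap) : FareyBracket x where
  p := B.p
  q := B.q + m * B.p
  r := B.r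
  s := B.s + m * B.r
  one_le_p := B.one_le_p
  one_le_q := le_add_right B.one_le_q
  det := by push_cast; linear_combination B.det
  lower := B.lower
  upper := by simp only [lowerGap, upperGap] at h; push_cast; linarith

@[simp]
lemma lowerGap_shiftLower (m : ℕ) (h) :
    (B.shiftLower m h).lowerGap = B.lowerGap - m * B.upperGap := by
  simp only [shiftLower, lowerGap, upperGap]; push_cast; ring

@[simp]
lemma upperGap_shiftLower (m : ℕ) (h) : (B.shiftLower m h).upperGap = B.upperGap := rfl

@[simp]
lemma lowerGap_shiftUpper (m : ℕ) (h) : (B.shiftUpper m h).lowerGap = B.lowerGap := rfl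

@[simp]
lemma upperGap_shiftUpper (m : ℕ) (h) :
    (B.shiftUpper m h).upperGap = B.upperGap - m * B.lowerGap := by
  simp only [shiftUpper, lowerGap, upperGap]; push_cast; ring

lemma lowerGap_sub_mul_upperGap_ne_zero (hx : Irrational x) (m : ℕ) :
    B.lowerGap - m * B.upperGap ≠ 0 := by
  convert hx.natCast_mul_sub_intCast_ne_zero (n := B.p + m * B.q)
    (by have := B.one_le_p; omega) (B.r + m * B.s) using 1
  simp only [lowerGap, upperGap]; push_cast; ring

lemma upperGap_sub_mul_lowerGap_ne_zero (hx : Irrational x) (m : ℕ) :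
    B.upperGap - m * B.lowerGap ≠ 0 := by
  rw [← neg_ne_zero]
  convert hx.natCast_mul_sub_intCast_ne_zero (n := B.q + m * B.p)
    (by have := B.one_le_q; omega) (B.s + m * B.r) using 1
  simp only [lowerGap, upperGap]; push_cast; ring

lemma exists_p_eq_and_upperGap_lt (hx : Irrational x) :
    ∃ B' : FareyBracket x, B'.p = B.p ∧ B'.upperGap < B'.lowerGap := by
  obtain ⟨m, hpos, hlt⟩ := exists_nat_sub_mul_mem_Ioo B.upperGap_pos.le B.lowerGap_pos
    (B.upperGap_sub_mul_lowerGap_ne_zero hx)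
  exact ⟨B.shiftUpper m hpos, rfl, by simpa using hlt⟩

lemma exists_p_lt_and_lowerGap_lt (hx : Irrational x) :
    ∃ B' : FareyBracket x, B.p < B'.p ∧ B'.lowerGap < B'.upperGap := by
  obtain ⟨B₁, hp, h₁⟩ := B.exists_p_eq_and_upperGap_lt hx
  obtain ⟨m, hpos, hlt⟩ := exists_nat_sub_mul_mem_Ioo B₁.lowerGap_pos.le B₁.upperGap_pos
    (B₁.lowerGap_sub_mul_upperGap_ne_zero hx)
  have hm : m ≠ 0 := by
    rintro rfl
    rw [Nat.cast_zero, zero_mul, sub_zero] at hlt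
    exact h₁.not_gt hlt
  exact ⟨B₁.shiftLower m hpos, hp ▸ Nat.lt_add_of_pos_right (Nat.mul_pos (Nat.pos_of_ne_zero hm)
    B₁.one_le_q), by simpa using hlt⟩

end FareyBracket

lemma Irrational.frequently_mul_fract_mul_lt_one {x : ℝ} (hx : Irrational x) :
    ∃ᶠ n : ℕ in atTop, 0 < Int.fract (n * x) ∧ n * Int.fract (n * x) < 1 := by
  have key (N : ℕ) : ∃ B : FareyBracket x, N ≤ B.p ∧ B.lowerGap < B.upperGap := by
    induction N with
    | zero =>
      obtain ⟨B, -, h⟩ := (FareyBracket.floor hx).exists_p_lt_and_lowerGap_lt hx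
      exact ⟨B, Nat.zero_le _, h⟩
    | succ N ih =>
      obtain ⟨B, hN, -⟩ := ih
      obtain ⟨B', hp, h⟩ := B.exists_p_lt_and_lowerGap_lt hx
      exact ⟨B', by omega, h⟩
  refine frequently_atTop.2 fun N => ?_
  obtain ⟨B, hN, h⟩ := key N
  refine ⟨B.p, hN, ?_⟩
  rw [B.fract_p_mul h]
  exact ⟨B.lowerGap_pos, B.p_mul_lowerGap_lt_one h⟩

lemma exists_lt_fract_add_div_eq (y : ℝ) {n : ℕ} (hn : 0 < n) :
    ∃ j < n, Int.fract (y + j / n) = Int.fract (n * y) / n := by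
  have hn' : (0 : ℝ) < n := Nat.cast_pos.2 hn
  set F := ⌊(n : ℝ) * y⌋
  have hj : 0 ≤ (-F) % (n : ℤ) := Int.emod_nonneg _ (by exact_mod_cast hn.ne')
  have hjn : (-F) % (n : ℤ) < n := Int.emod_lt_of_pos _ (by exact_mod_cast hn)
  refine ⟨((-F) % (n : ℤ)).toNat, by omega,
    Int.fract_eq_iff.2 ⟨by positivity, ?_, -((-F) / n), ?_⟩⟩
  · rw [div_lt_one hn']
    exact (Int.fract_lt_one _).trans_le (by exact_mod_cast hn)
  · have hcast : ((((-F) % (n : ℤ)).toNat : ℕ) : ℝ) = -F - n * ((-F) / (n : ℤ) : ℤ) := by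
      rw [← Int.cast_natCast, Int.toNat_of_nonneg hj, Int.emod_def]; push_cast; ring
    rw [hcast, show Int.fract ((n : ℝ) * y) = n * y - F from rfl]
    field_simp
    push_cast
    ring

lemma integrableOn_fract_rpow_Ioc {s : ℝ} (hs : -1 < s) :
    IntegrableOn (fun x : ℝ => Int.fract x ^ s) (Set.Ioc 0 1) := by
  rw [integrableOn_Ioc_iff_integrableOn_Ioo enorm_ne_top]
  exact ((intervalIntegral.integrableOn_Ioo_rpow_iff one_pos).2 hs).congr_fun
    (fun t ht => by rw [Int.fract_eq_self.2 ⟨ht.1.le, ht.2⟩]) measurableSet_Ioo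

lemma rpow_two_mul_sub_one_le_sum_fract_rpow {δ : ℝ} (hδ : 0 ≤ δ) {x : ℝ} {n : ℕ}
    (hpos : 0 < Int.fract (n * x)) (hlt : n * Int.fract (n * x) < 1) :
    (n : ℝ) ^ (2 * δ - 1) ≤ (n : ℝ)⁻¹ * ∑ j ∈ Finset.range n, Int.fract (x + j / n) ^ (-δ) := by
  have hn : 0 < n := Nat.pos_of_ne_zero fun h => by simp [h] at hpos
  have hn' : (0 : ℝ) < n := Nat.cast_pos.2 hn
  obtain ⟨j, hj, hfract⟩ := exists_lt_fract_add_div_eq x hn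
  have hsmall : Int.fract (n * x) / n ≤ ((n : ℝ) ^ 2)⁻¹ := by
    rw [div_le_iff₀ hn', pow_two, mul_inv, inv_mul_cancel_right₀ hn'.ne', ← one_div,
      le_div_iff₀ hn']
    linarith
  calc (n : ℝ) ^ (2 * δ - 1) = (n : ℝ)⁻¹ * (((n : ℝ) ^ 2)⁻¹) ^ (-δ) := by
        rw [Real.inv_rpow (by positivity), Real.rpow_neg (by positivity), inv_inv,
          ← Real.rpow_natCast, ← Real.rpow_mul hn'.le, Real.rpow_sub_one hn'.ne', div_eq_inv_mul]
        norm_num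
    _ ≤ (n : ℝ)⁻¹ * (Int.fract (n * x) / n) ^ (-δ) := by
        have := Real.rpow_le_rpow_of_nonpos (div_pos hpos hn') hsmall (neg_nonpos.2 hδ)
        gcongr
    _ = (n : ℝ)⁻¹ * Int.fract (x + j / n) ^ (-δ) := by rw [hfract]
    _ ≤ (n : ℝ)⁻¹ * ∑ j ∈ Finset.range n, Int.fract (x + j / n) ^ (-δ) := by
        gcongr
        exact Finset.single_le_sum (f := fun i : ℕ => Int.fract (x + i / n) ^ (-δ))
          (fun i _ => Real.rpow_nonneg (Int.fract_nonneg _) _) (Finset.mem_range.2 hj)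

/-- For `1/2 < δ < 1`, the function `f(x) = x^{-δ}` on `(0,1]`,
extended periodically to `T = ℝ/ℤ` (via the fractional part), is Lebesgue integrable,
but the Riemann sums `R_n f(x) = (1/n) ∑_{j<n} f({x + j/n})` fail to converge to `∫ f`
for almost every `x`: in fact `limsup_n R_n f(x) = +∞` for almost every `x`. -/
theorem riemann_sums_divergence (δ : ℝ) (hδ₁ : 1 / 2 < δ) (hδ₂ : δ < 1)
    (f : ℝ → ℝ) (hf : ∀ x : ℝ, f x = Int.fract x ^ (-δ)) :
    IntegrableOn f (Set.Ioc (0 : ℝ) 1) volume ∧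
      ∀ᵐ x : ℝ,
        (¬ Tendsto (fun n : ℕ => (n : ℝ)⁻¹ * ∑ j ∈ Finset.range n, f (x + (j : ℝ) / (n : ℝ)))
            atTop (𝓝 (∫ t in Set.Ioc (0 : ℝ) 1, f t))) ∧
        ∀ M : ℝ, ∃ᶠ n : ℕ in atTop,
          M < (n : ℝ)⁻¹ * ∑ j ∈ Finset.range n, f (x + (j : ℝ) / (n : ℝ)) := by
  obtain rfl : f = fun x => Int.fract x ^ (-δ) := funext hf
  refine ⟨integrableOn_fract_rpow_Ioc (by linarith), ?_⟩
  filter_upwards [(Set.countable_range ((↑) : ℚ → ℝ)).ae_notMem volume] with x (hx : Irrational x)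
  have hunbounded (M : ℝ) : ∃ᶠ n : ℕ in atTop,
      M < (n : ℝ)⁻¹ * ∑ j ∈ Finset.range n, Int.fract (x + j / n) ^ (-δ) := by
    have hgrowth : ∀ᶠ n : ℕ in atTop, M < (n : ℝ) ^ (2 * δ - 1) :=
      ((tendsto_rpow_atTop (by linarith)).comp tendsto_natCast_atTop_atTop).eventually_gt_atTop M
    refine (hx.frequently_mul_fract_mul_lt_one.and_eventually hgrowth).mono ?_
    rintro n ⟨⟨hpos, hlt⟩, hM⟩
    exact hM.trans_le (rpow_two_mul_sub_one_le_sum_fract_rpow (by linarith) hpos hlt)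
  refine ⟨fun hlim => ?_, hunbounded⟩
  obtain ⟨n, hbig, hsmall⟩ := ((hunbounded _).and_eventually
    (hlim.eventually_lt_const (lt_add_one _))).exists
  exact hbig.not_gt hsmall
end

section
/- Let G be a compact group acting measure-preservingly on a probability space (X,μ), with Haar probability measure ρ. Then for every f ∈ L¹(X,μ), the conditional expectation of f with respect to the σ-field of G-invariant Borel sets satisfies E(f | I)(x) = ∫_G f(tx) dρ(t) for almost every x ∈ X. -/
open MeasureTheory Filter Topology Pointwise
open scoped NNReal

/-- The σ-field of `G`-invariant measurable subsets of `X`. -/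
def invariantSigma (G X : Type*) [Group G] [MulAction G X] [m : MeasurableSpace X] :
    MeasurableSpace X where
  MeasurableSet' A := MeasurableSet A ∧ ∀ t : G, t • A = A
  measurableSet_empty := ⟨MeasurableSet.empty, fun t => Set.smul_set_empty⟩
  measurableSet_compl := fun A hA =>
    ⟨hA.1.compl, fun t => by rw [Set.smul_set_compl, hA.2 t]⟩
  measurableSet_iUnion := fun s hs =>
    ⟨MeasurableSet.iUnion fun i => (hs i).1, fun t => by
      rw [Set.smul_set_iUnion]; exact Set.iUnion_congr fun i => (hs i).2 t⟩

/-!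
The orbital average `g x = ∫ f (t • x) dρ(t)` is constant on orbits by right invariance of
`ρ` (a compact group is unimodular), so it is measurable for the invariant σ-field once `f`
is replaced by a Borel version. For a `G`-invariant `A`, the measure `μ|_A` is again
`G`-invariant, hence `(x, t) ↦ t • x` pushes `μ|_A ⊗ ρ` forward to `μ|_A`, and Fubini gives
`∫_A g dμ = ∫_A f dμ`. These are the defining properties of `μ[f | invariantSigma G X]`.
-/

theorem MeasureTheory.Measure.isMulRightInvariant_of_isHaarMeasure_of_compactSpace
    {G : Type*} [Group G] [TopologicalSpace G] [IsTopologicalGroup G] [CompactSpace G]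
    [MeasurableSpace G] [BorelSpace G] (ρ : Measure G) [ρ.IsHaarMeasure]
    [IsProbabilityMeasure ρ] : ρ.IsMulRightInvariant where
  map_mul_right_eq_self g :=
    have : IsProbabilityMeasure (ρ.map (· * g)) :=
      Measure.isProbabilityMeasure_map (measurable_mul_const g).aemeasurable
    Measure.isHaarMeasure_eq_of_isProbabilityMeasure _ _

namespace invariantSigma

variable {G X : Type*} [Group G] [MulAction G X] [MeasurableSpace X]

theorem le : invariantSigma G X ≤ ‹MeasurableSpace X› := fun _ hA => hA.1

theorem measurable_of_forall_smul_eq {β : Type*} [MeasurableSpace β] {h : X → β}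
    (hh : Measurable h) (h_inv : ∀ (t : G) (x : X), h (t • x) = h x) :
    Measurable[invariantSigma G X] h := fun B hB =>
  ⟨hh hB, fun t => by
    ext x
    simp only [Set.mem_smul_set_iff_inv_smul_mem, Set.mem_preimage, h_inv]⟩

theorem stronglyMeasurable_of_forall_smul_eq {E : Type*} [TopologicalSpace E]
    [TopologicalSpace.PseudoMetrizableSpace E] {h : X → E} (hh : StronglyMeasurable h)
    (h_inv : ∀ (t : G) (x : X), h (t • x) = h x) : StronglyMeasurable[invariantSigma G X] h := by
  borelize E
  exact stronglyMeasurable_iff_measurable_separable.2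
    ⟨measurable_of_forall_smul_eq hh.measurable h_inv, hh.isSeparable_range⟩

end invariantSigma

section Action

variable {G X : Type*} [Group G] [MeasurableSpace G] [MulAction G X] [MeasurableSpace X]
  {ρ : Measure G} {ν : Measure X}

theorem map_smul_restrict_of_smul_eq (hact : Measurable fun p : G × X => p.1 • p.2)
    (hν : ∀ t : G, ν.map (t • ·) = ν) {A : Set X} (hA : MeasurableSet A)
    (hA_inv : ∀ t : G, t • A = A) (t : G) : (ν.restrict A).map (t • ·) = ν.restrict A := by
  have ht : Measurable (t • · : X → X) := hact.comp measurable_prodMk_left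
  have hpre : (t • · : X → X) ⁻¹' A = A := by
    rw [Set.preimage_smul, hA_inv]
  calc (ν.restrict A).map (t • ·) = (ν.restrict ((t • ·) ⁻¹' A)).map (t • ·) := by rw [hpre]
    _ = ν.restrict A := by rw [← Measure.restrict_map ht hA, hν]

theorem measurePreserving_prod_smul [IsProbabilityMeasure ρ] [SFinite ν]
    (hact : Measurable fun p : G × X => p.1 • p.2) (hν : ∀ t : G, ν.map (t • ·) = ν) :
    MeasurePreserving (fun p : X × G => p.2 • p.1) (ν.prod ρ) ν := by
  have hmeas : Measurable fun p : X × G => p.2 • p.1 := hact.comp measurable_swap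
  refine ⟨hmeas, Measure.ext fun A hA => ?_⟩
  have hslice (t : G) : ν ((fun x => (x, t)) ⁻¹' ((fun p : X × G => p.2 • p.1) ⁻¹' A)) = ν A := by
    have ht : Measurable (t • · : X → X) := hact.comp measurable_prodMk_left
    change ν ((t • ·) ⁻¹' A) = ν A
    rw [← Measure.map_apply ht hA, hν t]
  rw [Measure.map_apply hmeas hA, Measure.prod_apply_symm (hmeas hA)]
  simp only [hslice, lintegral_const, measure_univ, mul_one]

theorem MeasureTheory.Integrable.comp_prod_smul {E : Type*} [NormedAddCommGroup E]
    [IsProbabilityMeasure ρ] [SFinite ν] (hact : Measurable fun p : G × X => p.1 • p.2)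
    (hν : ∀ t : G, ν.map (t • ·) = ν) {f : X → E} (hf : Integrable f ν) :
    Integrable (fun p : X × G => f (p.2 • p.1)) (ν.prod ρ) :=
  (measurePreserving_prod_smul hact hν).integrable_comp_of_integrable hf

end Action

section OrbitalAverage

variable {G X E : Type*} [Group G] [MeasurableSpace G] [MulAction G X]
  [NormedAddCommGroup E] [NormedSpace ℝ E] {ρ : Measure G}

noncomputable def orbitalAverage (ρ : Measure G) (f : X → E) (x : X) : E :=
  ∫ t, f (t • x) ∂ρ

theorem orbitalAverage_smul [MeasurableMul G] [ρ.IsMulRightInvariant] (f : X → E) (s : G)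
    (x : X) : orbitalAverage ρ f (s • x) = orbitalAverage ρ f x := by
  simp only [orbitalAverage, ← mul_smul]
  exact integral_mul_right_eq_self (fun t => f (t • x)) s

variable [MeasurableSpace X] {ν : Measure X}

theorem MeasureTheory.StronglyMeasurable.orbitalAverage [SFinite ρ] {f : X → E}
    (hf : StronglyMeasurable f) (hact : Measurable fun p : G × X => p.1 • p.2) :
    StronglyMeasurable (orbitalAverage ρ f) :=
  (hf.comp_measurable (hact.comp measurable_swap)).integral_prod_right'

variable [IsProbabilityMeasure ρ] [SFinite ν]

theorem orbitalAverage_ae_eq_of_ae_eq (hact : Measurable fun p : G × X => p.1 • p.2)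
    (hν : ∀ t : G, ν.map (t • ·) = ν) {f f' : X → E} (hff' : f =ᵐ[ν] f') :
    orbitalAverage ρ f =ᵐ[ν] orbitalAverage ρ f' := by
  have h_ae : ∀ᵐ x ∂ν, ∀ᵐ t ∂ρ, f (t • x) = f' (t • x) :=
    Measure.ae_ae_of_ae_prod
      ((measurePreserving_prod_smul hact hν).quasiMeasurePreserving.ae_eq hff')
  filter_upwards [h_ae] with x hx using integral_congr_ae hx

theorem MeasureTheory.Integrable.orbitalAverage (hact : Measurable fun p : G × X => p.1 • p.2)
    (hν : ∀ t : G, ν.map (t • ·) = ν) {f : X → E} (hf : Integrable f ν) :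
    Integrable (orbitalAverage ρ f) ν :=
  (hf.comp_prod_smul hact hν).integral_prod_left

theorem integral_orbitalAverage (hact : Measurable fun p : G × X => p.1 • p.2)
    (hν : ∀ t : G, ν.map (t • ·) = ν) {f : X → E} (hf : Integrable f ν) :
    ∫ x, orbitalAverage ρ f x ∂ν = ∫ x, f x ∂ν := by
  have hmp := measurePreserving_prod_smul (ρ := ρ) hact hν
  change ∫ x, ∫ t, f (t • x) ∂ρ ∂ν = _
  rw [← integral_prod _ (hf.comp_prod_smul hact hν),
    ← integral_map hmp.measurable.aemeasurable (by rw [hmp.map_eq]; exact hf.1),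
    hmp.map_eq]

theorem aestronglyMeasurable_invariantSigma_orbitalAverage [MeasurableMul G]
    [ρ.IsMulRightInvariant] (hact : Measurable fun p : G × X => p.1 • p.2)
    (hν : ∀ t : G, ν.map (t • ·) = ν) {f : X → E} (hf : AEStronglyMeasurable f ν) :
    AEStronglyMeasurable[invariantSigma G X] (orbitalAverage ρ f) ν :=
  ⟨orbitalAverage ρ (hf.mk f),
    invariantSigma.stronglyMeasurable_of_forall_smul_eq
      (hf.stronglyMeasurable_mk.orbitalAverage hact) (orbitalAverage_smul _),
    orbitalAverage_ae_eq_of_ae_eq hact hν hf.ae_eq_mk⟩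

end OrbitalAverage

/-- For a compact group `G` with Haar probability measure `ρ` acting
measurably and measure-preservingly on a probability space `(X,μ)`, the conditional
expectation of `f ∈ L¹(X,μ)` with respect to the σ-field of `G`-invariant Borel sets
equals `x ↦ ∫_G f(t•x) dρ(t)` almost everywhere. -/
theorem condexp_invariant_eq_orbital_average
    {G : Type*} [Group G] [TopologicalSpace G] [IsTopologicalGroup G]
    [CompactSpace G] [MeasurableSpace G] [BorelSpace G]
    (ρ : Measure G) [ρ.IsHaarMeasure] [IsProbabilityMeasure ρ]
    {X : Type*} [MeasurableSpace X] [MulAction G X]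
    (hact : Measurable fun p : G × X => p.1 • p.2)
    (μ : Measure X) [IsProbabilityMeasure μ]
    (hinv : ∀ s : G, Measure.map (fun x => s • x) μ = μ)
    (f : X → ℝ) (hf : Integrable f μ) :
    (μ[f | invariantSigma G X]) =ᵐ[μ] fun x => ∫ t, f (t • x) ∂ρ := by
  have : ρ.IsMulRightInvariant := ρ.isMulRightInvariant_of_isHaarMeasure_of_compactSpace
  have hm : invariantSigma G X ≤ _ := invariantSigma.le
  refine (ae_eq_condExp_of_forall_setIntegral_eq hm hf
    (fun _ _ _ => (hf.orbitalAverage hact hinv).integrableOn) (fun A hA _ => ?_)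
    (aestronglyMeasurable_invariantSigma_orbitalAverage hact hinv hf.1)).symm
  exact integral_orbitalAverage hact (map_smul_restrict_of_smul_eq hact hinv hA.1 hA.2) hf.restrict
end
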